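/- Tensorization of the maximal correlation ribbon: if p_{A₁A₂B₁B₂} = p_{A₁B₁} · p_{A₂B₂}, then 𝔖(A₁A₂, B₁B₂) = 𝔖(A₁,B₁) ∩ 𝔖(A₂,B₂). -/
import Mathlib


open Finset

noncomputable def expec {α : Type*} [Fintype α] (p f : α → ℝ) : ℝ := ∑ a, p a * f a

noncomputable def pVar {α : Type*} [Fintype α] (p f : α → ℝ) : ℝ :=
  expec p (fun a => f a ^ 2) - (expec p f) ^ 2

/-- `p` is a probability distribution on `α × β`. -/
def IsDist {α β : Type*} [Fintype α] [Fintype β] (p : α → β → ℝ) : Prop :=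
  (∀ a b, 0 ≤ p a b) ∧ (∑ a, ∑ b, p a b) = 1

noncomputable def margA {α β : Type*} [Fintype α] [Fintype β] (p : α → β → ℝ) : α → ℝ :=
  fun a => ∑ b, p a b

noncomputable def margB {α β : Type*} [Fintype α] [Fintype β] (p : α → β → ℝ) : β → ℝ :=
  fun b => ∑ a, p a b

/-- conditional expectation `E_{B|A=a}[f]` (with the convention `x / 0 = 0`). -/
noncomputable def condExpB {α β : Type*} [Fintype α] [Fintype β] (p f : α → β → ℝ) : α → ℝ :=
  fun a => (∑ b, p a b * f a b) / margA p a

/-- conditional expectation `E_{A|B=b}[f]` (with the convention `x / 0 = 0`). -/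
noncomputable def condExpA {α β : Type*} [Fintype α] [Fintype β] (p f : α → β → ℝ) : β → ℝ :=
  fun b => (∑ a, p a b * f a b) / margB p b

noncomputable def jointVar {α β : Type*} [Fintype α] [Fintype β] (p f : α → β → ℝ) : ℝ :=
  pVar (fun x : α × β => p x.1 x.2) (fun x => f x.1 x.2)

/-- `(l1, l2)` belongs to the maximal correlation ribbon of `p`:
`Var[f] ≥ l1 * Var_A E_{B|A}[f] + l2 * Var_B E_{A|B}[f]` for every `f`. -/
def memMC {α β : Type*} [Fintype α] [Fintype β] (p : α → β → ℝ) (l1 l2 : ℝ) : Prop :=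
  0 ≤ l1 ∧ 0 ≤ l2 ∧ ∀ f : α → β → ℝ,
    l1 * pVar (margA p) (condExpB p f) + l2 * pVar (margB p) (condExpA p f) ≤ jointVar p f

/-- Maximal correlation of the joint distribution `p`: the supremum of `E[f_A g_B]`
over mean-zero, unit-second-moment functions of `A` and of `B` (0 if no such pair exists,
since `Real.sSup ∅ = 0`). -/
noncomputable def maxCorr {α β : Type*} [Fintype α] [Fintype β] (p : α → β → ℝ) : ℝ :=
  sSup {r | ∃ f : α → ℝ, ∃ g : β → ℝ,
    expec (margA p) f = 0 ∧ expec (margB p) g = 0 ∧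
    expec (margA p) (fun a => f a ^ 2) = 1 ∧
    expec (margB p) (fun b => g b ^ 2) = 1 ∧
    r = ∑ a, ∑ b, p a b * f a * g b}

section Aux
variable {α β γ δ : Type*} [Fintype α] [Fintype β] [Fintype γ] [Fintype δ]

lemma expec_congr {p f g : α → ℝ} (h : ∀ a, p a ≠ 0 → f a = g a) :
    expec p f = expec p g := by
  unfold expec
  refine Finset.sum_congr rfl fun a _ => ?_
  by_cases hp : p a = 0
  · simp [hp]
  · rw [h a hp]

lemma pVar_congr {p f g : α → ℝ} (h : ∀ a, p a ≠ 0 → f a = g a) :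
    pVar p f = pVar p g := by
  unfold pVar
  rw [expec_congr h, expec_congr (fun a ha => by rw [h a ha])]

lemma margA_zero {p : α → β → ℝ} (h : IsDist p) {a : α} (ha : margA p a = 0) (b : β) :
    p a b = 0 :=
  (Finset.sum_eq_zero_iff_of_nonneg (fun b _ => h.1 a b)).1 ha b (Finset.mem_univ b)

lemma margB_zero {p : α → β → ℝ} (h : IsDist p) {b : β} (hb : margB p b = 0) (a : α) :
    p a b = 0 :=
  (Finset.sum_eq_zero_iff_of_nonneg (fun a _ => h.1 a b)).1 hb a (Finset.mem_univ a)

lemma margA_nonneg {p : α → β → ℝ} (h : IsDist p) (a : α) : 0 ≤ margA p a :=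
  Finset.sum_nonneg fun b _ => h.1 a b

lemma margB_nonneg {p : α → β → ℝ} (h : IsDist p) (b : β) : 0 ≤ margB p b :=
  Finset.sum_nonneg fun a _ => h.1 a b

lemma sum_margA {p : α → β → ℝ} (h : IsDist p) : ∑ a, margA p a = 1 := by
  simpa [margA] using h.2

lemma sum_margB {p : α → β → ℝ} (h : IsDist p) : ∑ b, margB p b = 1 := by
  unfold margB; rw [Finset.sum_comm]; exact h.2

lemma IsDist.transpose {p : α → β → ℝ} (h : IsDist p) : IsDist (fun b a => p a b) :=
  ⟨fun b a => h.1 a b, by rw [Finset.sum_comm]; exact h.2⟩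

lemma margA_prod (p1 : α → β → ℝ) (p2 : γ → δ → ℝ) :
    margA (fun (a : α × γ) (b : β × δ) => p1 a.1 b.1 * p2 a.2 b.2)
      = fun a => margA p1 a.1 * margA p2 a.2 := by
  funext a
  unfold margA
  simp only [Fintype.sum_prod_type, ← Finset.mul_sum]
  rw [← Finset.sum_mul]

lemma margB_prod (p1 : α → β → ℝ) (p2 : γ → δ → ℝ) :
    margB (fun (a : α × γ) (b : β × δ) => p1 a.1 b.1 * p2 a.2 b.2)
      = fun b => margB p1 b.1 * margB p2 b.2 := by
  funext b
  unfold margB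
  simp only [Fintype.sum_prod_type, ← Finset.mul_sum]
  rw [← Finset.sum_mul]

lemma pVar_prod (p : α → ℝ) (q : β → ℝ) (h : α → β → ℝ) :
    pVar (fun z : α × β => p z.1 * q z.2) (fun z => h z.1 z.2)
      = (∑ b, q b * pVar p (fun a => h a b))
        + pVar q (fun b => expec p (fun a => h a b)) := by
  have key : ∀ F : α → β → ℝ,
      (∑ z : α × β, (p z.1 * q z.2) * F z.1 z.2) = ∑ b, q b * ∑ a, p a * F a b := by
    intro F
    rw [Fintype.sum_prod_type_right]
    refine Finset.sum_congr rfl fun b _ => ?_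
    rw [Finset.mul_sum]
    exact Finset.sum_congr rfl fun a _ => by ring
  simp only [pVar, expec]
  rw [key (fun a b => h a b ^ 2), key h]
  simp only [mul_sub, Finset.sum_sub_distrib]
  ring

lemma pVar_expand (p f : α → ℝ) (hp : ∑ a, p a = 1) :
    pVar p f = ∑ a, p a * (f a - expec p f) ^ 2 := by
  have h : ∑ a, p a * (f a - expec p f) ^ 2
      = ∑ a, (p a * f a ^ 2 - 2 * expec p f * (p a * f a) + (expec p f) ^ 2 * p a) :=
    Finset.sum_congr rfl fun a _ => by ring
  rw [h, Finset.sum_add_distrib, Finset.sum_sub_distrib, ← Finset.mul_sum, ← Finset.mul_sum, hp]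
  unfold pVar expec
  ring

lemma weighted_cs (w c : β → ℝ) (hw0 : ∀ b, 0 ≤ w b) (hw1 : ∑ b, w b = 1) :
    (∑ b, w b * c b) ^ 2 ≤ ∑ b, w b * c b ^ 2 := by
  have h := Finset.sum_mul_sq_le_sq_mul_sq Finset.univ (fun b => Real.sqrt (w b))
    (fun b => Real.sqrt (w b) * c b)
  have e1 : ∀ b, Real.sqrt (w b) * (Real.sqrt (w b) * c b) = w b * c b := fun b => by
    rw [← mul_assoc, Real.mul_self_sqrt (hw0 b)]
  have e2 : ∀ b, Real.sqrt (w b) ^ 2 = w b := fun b => Real.sq_sqrt (hw0 b)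
  have e3 : ∀ b, (Real.sqrt (w b) * c b) ^ 2 = w b * c b ^ 2 := fun b => by
    rw [mul_pow, e2 b]
  simp only [e1, e2, e3] at h
  calc (∑ b, w b * c b) ^ 2 ≤ (∑ b, w b) * ∑ b, w b * c b ^ 2 := h
    _ = ∑ b, w b * c b ^ 2 := by rw [hw1, one_mul]

lemma pVar_jensen (p : α → ℝ) (hp0 : ∀ a, 0 ≤ p a) (hp1 : ∑ a, p a = 1)
    (w : β → ℝ) (hw0 : ∀ b, 0 ≤ w b) (hw1 : ∑ b, w b = 1) (g : β → α → ℝ) :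
    pVar p (fun a => ∑ b, w b * g b a) ≤ ∑ b, w b * pVar p (g b) := by
  have hmean : expec p (fun a => ∑ b, w b * g b a) = ∑ b, w b * expec p (g b) := by
    unfold expec
    calc ∑ a, p a * ∑ b, w b * g b a
        = ∑ a, ∑ b, w b * (p a * g b a) := Finset.sum_congr rfl fun a _ => by
          rw [Finset.mul_sum]; exact Finset.sum_congr rfl fun b _ => by ring
      _ = ∑ b, ∑ a, w b * (p a * g b a) := Finset.sum_comm
      _ = ∑ b, w b * ∑ a, p a * g b a :=
          Finset.sum_congr rfl fun b _ => by rw [Finset.mul_sum]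
  rw [pVar_expand p _ hp1]
  have step1 : ∀ a, p a * ((∑ b, w b * g b a) - expec p (fun a => ∑ b, w b * g b a)) ^ 2
      ≤ p a * ∑ b, w b * (g b a - expec p (g b)) ^ 2 := by
    intro a
    have e : (∑ b, w b * g b a) - expec p (fun a => ∑ b, w b * g b a)
        = ∑ b, w b * (g b a - expec p (g b)) := by
      rw [hmean]
      simp [mul_sub, Finset.sum_sub_distrib]
    rw [e]
    exact mul_le_mul_of_nonneg_left
      (weighted_cs w (fun b => g b a - expec p (g b)) hw0 hw1) (hp0 a)
  calc ∑ a, p a * ((∑ b, w b * g b a) - expec p (fun a => ∑ b, w b * g b a)) ^ 2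
      ≤ ∑ a, p a * ∑ b, w b * (g b a - expec p (g b)) ^ 2 :=
        Finset.sum_le_sum fun a _ => step1 a
    _ = ∑ b, w b * ∑ a, p a * (g b a - expec p (g b)) ^ 2 := by
        calc ∑ a, p a * ∑ b, w b * (g b a - expec p (g b)) ^ 2
            = ∑ a, ∑ b, w b * (p a * (g b a - expec p (g b)) ^ 2) :=
              Finset.sum_congr rfl fun a _ => by
                rw [Finset.mul_sum]; exact Finset.sum_congr rfl fun b _ => by ring
          _ = ∑ b, ∑ a, w b * (p a * (g b a - expec p (g b)) ^ 2) := Finset.sum_comm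
          _ = ∑ b, w b * ∑ a, p a * (g b a - expec p (g b)) ^ 2 :=
              Finset.sum_congr rfl fun b _ => by rw [Finset.mul_sum]
    _ = ∑ b, w b * pVar p (g b) :=
        Finset.sum_congr rfl fun b _ => by rw [pVar_expand p (g b) hp1]

end Aux

section Key
variable {α₁ β₁ α₂ β₂ : Type*} [Fintype α₁] [Fintype β₁] [Fintype α₂] [Fintype β₂]

lemma key_ineq (p1 : α₁ → β₁ → ℝ) (p2 : α₂ → β₂ → ℝ) (h1 : IsDist p1) (h2 : IsDist p2)
    (F : α₁ × α₂ → β₁ × β₂ → ℝ) :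
    pVar (margA (fun (a : α₁ × α₂) (b : β₁ × β₂) => p1 a.1 b.1 * p2 a.2 b.2))
         (condExpB (fun (a : α₁ × α₂) (b : β₁ × β₂) => p1 a.1 b.1 * p2 a.2 b.2) F)
      ≤ (∑ a₂, ∑ b₂, p2 a₂ b₂ *
            pVar (margA p1) (condExpB p1 (fun a₁ b₁ => F (a₁, a₂) (b₁, b₂))))
        + pVar (margA p2) (condExpB p2
            (fun a₂ b₂ => ∑ a₁, ∑ b₁, p1 a₁ b₁ * F (a₁, a₂) (b₁, b₂))) := by
  have hm1 : ∑ a, margA p1 a = 1 := sum_margA h1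
  have hm10 : ∀ a, 0 ≤ margA p1 a := margA_nonneg h1
  have hdecomp : pVar (margA (fun (a : α₁ × α₂) (b : β₁ × β₂) => p1 a.1 b.1 * p2 a.2 b.2))
      (condExpB (fun (a : α₁ × α₂) (b : β₁ × β₂) => p1 a.1 b.1 * p2 a.2 b.2) F)
      = (∑ a₂, margA p2 a₂ * pVar (margA p1)
            (fun a₁ => condExpB (fun (a : α₁ × α₂) (b : β₁ × β₂) => p1 a.1 b.1 * p2 a.2 b.2)
              F (a₁, a₂)))
        + pVar (margA p2) (fun a₂ => expec (margA p1)
            (fun a₁ => condExpB (fun (a : α₁ × α₂) (b : β₁ × β₂) => p1 a.1 b.1 * p2 a.2 b.2)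
              F (a₁, a₂))) := by
    rw [margA_prod]
    exact pVar_prod (margA p1) (margA p2)
      (fun a₁ a₂ => condExpB (fun (a : α₁ × α₂) (b : β₁ × β₂) => p1 a.1 b.1 * p2 a.2 b.2)
        F (a₁, a₂))
  have hsecond : ∀ a₂, expec (margA p1)
      (fun a₁ => condExpB (fun (a : α₁ × α₂) (b : β₁ × β₂) => p1 a.1 b.1 * p2 a.2 b.2)
        F (a₁, a₂))
      = condExpB p2 (fun a₂ b₂ => ∑ a₁, ∑ b₁, p1 a₁ b₁ * F (a₁, a₂) (b₁, b₂)) a₂ := by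
    intro a₂
    simp only [expec, condExpB, congrFun (margA_prod p1 p2)]
    have hterm : ∀ a₁, margA p1 a₁ *
        ((∑ b : β₁ × β₂, p1 a₁ b.1 * p2 a₂ b.2 * F (a₁, a₂) b) / (margA p1 a₁ * margA p2 a₂))
        = (∑ b : β₁ × β₂, p1 a₁ b.1 * p2 a₂ b.2 * F (a₁, a₂) b) / margA p2 a₂ := by
      intro a₁
      by_cases hz : margA p1 a₁ = 0
      · have hnum : (∑ b : β₁ × β₂, p1 a₁ b.1 * p2 a₂ b.2 * F (a₁, a₂) b) = 0 :=
          Finset.sum_eq_zero fun b _ => by rw [margA_zero h1 hz b.1]; ring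
        simp [hz, hnum]
      · by_cases hz2 : margA p2 a₂ = 0
        · simp [hz2]
        · field_simp
    have hnum2 : (∑ a₁, ∑ b : β₁ × β₂, p1 a₁ b.1 * p2 a₂ b.2 * F (a₁, a₂) b)
        = ∑ b₂, p2 a₂ b₂ * ∑ a₁, ∑ b₁, p1 a₁ b₁ * F (a₁, a₂) (b₁, b₂) := by
      simp only [Fintype.sum_prod_type_right]
      rw [Finset.sum_comm]
      refine Finset.sum_congr rfl fun b₂ _ => ?_
      rw [Finset.mul_sum]
      refine Finset.sum_congr rfl fun a₁ _ => ?_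
      rw [Finset.mul_sum]
      exact Finset.sum_congr rfl fun b₁ _ => by ring
    calc ∑ a₁, margA p1 a₁ *
          ((∑ b : β₁ × β₂, p1 a₁ b.1 * p2 a₂ b.2 * F (a₁, a₂) b) / (margA p1 a₁ * margA p2 a₂))
        = ∑ a₁, (∑ b : β₁ × β₂, p1 a₁ b.1 * p2 a₂ b.2 * F (a₁, a₂) b) / margA p2 a₂ :=
          Finset.sum_congr rfl fun a₁ _ => hterm a₁
      _ = (∑ a₁, ∑ b : β₁ × β₂, p1 a₁ b.1 * p2 a₂ b.2 * F (a₁, a₂) b) / margA p2 a₂ :=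
          (Finset.sum_div _ _ _).symm
      _ = (∑ b₂, p2 a₂ b₂ * ∑ a₁, ∑ b₁, p1 a₁ b₁ * F (a₁, a₂) (b₁, b₂)) / margA p2 a₂ := by
          rw [hnum2]
  have hfirst : ∀ a₂, margA p2 a₂ * pVar (margA p1)
      (fun a₁ => condExpB (fun (a : α₁ × α₂) (b : β₁ × β₂) => p1 a.1 b.1 * p2 a.2 b.2)
        F (a₁, a₂))
      ≤ ∑ b₂, p2 a₂ b₂ * pVar (margA p1) (condExpB p1 (fun a₁ b₁ => F (a₁, a₂) (b₁, b₂))) := by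
    intro a₂
    by_cases hz2 : margA p2 a₂ = 0
    · have hz : ∀ b₂, p2 a₂ b₂ = 0 := margA_zero h2 hz2
      simp [hz2, hz]
    · have hrw : (fun a₁ => condExpB (fun (a : α₁ × α₂) (b : β₁ × β₂) =>
          p1 a.1 b.1 * p2 a.2 b.2) F (a₁, a₂))
          = fun a₁ => ∑ b₂, (p2 a₂ b₂ / margA p2 a₂) *
              condExpB p1 (fun a₁ b₁ => F (a₁, a₂) (b₁, b₂)) a₁ := by
        funext a₁
        simp only [condExpB, congrFun (margA_prod p1 p2)]
        rw [Fintype.sum_prod_type_right]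
        calc (∑ b₂, ∑ b₁, p1 a₁ b₁ * p2 a₂ b₂ * F (a₁, a₂) (b₁, b₂))
              / (margA p1 a₁ * margA p2 a₂)
            = (∑ b₂, p2 a₂ b₂ * ∑ b₁, p1 a₁ b₁ * F (a₁, a₂) (b₁, b₂))
              / (margA p1 a₁ * margA p2 a₂) := by
              congr 1
              refine Finset.sum_congr rfl fun b₂ _ => ?_
              rw [Finset.mul_sum]
              exact Finset.sum_congr rfl fun b₁ _ => by ring
          _ = ∑ b₂, (p2 a₂ b₂ / margA p2 a₂) *
                ((∑ b₁, p1 a₁ b₁ * F (a₁, a₂) (b₁, b₂)) / margA p1 a₁) := by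
              rw [Finset.sum_div]
              refine Finset.sum_congr rfl fun b₂ _ => ?_
              rw [div_mul_div_comm, mul_comm (margA p2 a₂) (margA p1 a₁)]
      rw [hrw]
      have hw0 : ∀ b₂, 0 ≤ p2 a₂ b₂ / margA p2 a₂ :=
        fun b₂ => div_nonneg (h2.1 a₂ b₂) (margA_nonneg h2 a₂)
      have hw1 : ∑ b₂, p2 a₂ b₂ / margA p2 a₂ = 1 := by
        rw [← Finset.sum_div]
        exact div_self hz2
      calc margA p2 a₂ * pVar (margA p1) (fun a₁ => ∑ b₂, (p2 a₂ b₂ / margA p2 a₂) *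
              condExpB p1 (fun a₁ b₁ => F (a₁, a₂) (b₁, b₂)) a₁)
          ≤ margA p2 a₂ * ∑ b₂, (p2 a₂ b₂ / margA p2 a₂) *
              pVar (margA p1) (condExpB p1 (fun a₁ b₁ => F (a₁, a₂) (b₁, b₂))) :=
            mul_le_mul_of_nonneg_left
              (pVar_jensen (margA p1) hm10 hm1 _ hw0 hw1
                (fun b₂ => condExpB p1 (fun a₁ b₁ => F (a₁, a₂) (b₁, b₂))))
              (margA_nonneg h2 a₂)
        _ = ∑ b₂, p2 a₂ b₂ * pVar (margA p1) (condExpB p1 (fun a₁ b₁ => F (a₁, a₂) (b₁, b₂))) := by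
            rw [Finset.mul_sum]
            refine Finset.sum_congr rfl fun b₂ _ => ?_
            have e : margA p2 a₂ * (p2 a₂ b₂ / margA p2 a₂) = p2 a₂ b₂ := by
              field_simp
            rw [← mul_assoc, e]
  rw [hdecomp, funext hsecond]
  exact add_le_add (Finset.sum_le_sum fun a₂ _ => hfirst a₂) (le_refl _)

end Key

section Key2
variable {α₁ β₁ α₂ β₂ : Type*} [Fintype α₁] [Fintype β₁] [Fintype α₂] [Fintype β₂]

lemma key_ineq' (p1 : α₁ → β₁ → ℝ) (p2 : α₂ → β₂ → ℝ) (h1 : IsDist p1) (h2 : IsDist p2)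
    (F : α₁ × α₂ → β₁ × β₂ → ℝ) :
    pVar (margB (fun (a : α₁ × α₂) (b : β₁ × β₂) => p1 a.1 b.1 * p2 a.2 b.2))
         (condExpA (fun (a : α₁ × α₂) (b : β₁ × β₂) => p1 a.1 b.1 * p2 a.2 b.2) F)
      ≤ (∑ b₂, ∑ a₂, p2 a₂ b₂ *
            pVar (margB p1) (condExpA p1 (fun a₁ b₁ => F (a₁, a₂) (b₁, b₂))))
        + pVar (margB p2) (condExpA p2
            (fun a₂ b₂ => ∑ b₁, ∑ a₁, p1 a₁ b₁ * F (a₁, a₂) (b₁, b₂))) :=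
  key_ineq (fun b a => p1 a b) (fun b a => p2 a b) h1.transpose h2.transpose
    (fun b a => F a b)

end Key2

section Fwd2
variable {α β : Type*} [Fintype α] [Fintype β]

lemma expec_const (p : α → ℝ) (hp : ∑ a, p a = 1) (c : ℝ) : expec p (fun _ => c) = c := by
  unfold expec
  rw [← Finset.sum_mul, hp, one_mul]

lemma pVar_const (p : α → ℝ) (hp : ∑ a, p a = 1) (c : ℝ) : pVar p (fun _ => c) = 0 := by
  unfold pVar expec
  rw [← Finset.sum_mul, ← Finset.sum_mul, hp]
  ring

lemma expec_prod_fst (p : α → ℝ) (q : β → ℝ) (hq : ∑ b, q b = 1) (f : α → ℝ) :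
    expec (fun z : α × β => p z.1 * q z.2) (fun z => f z.1) = expec p f := by
  unfold expec
  simp only [Fintype.sum_prod_type]
  refine Finset.sum_congr rfl fun a _ => ?_
  calc ∑ b, p a * q b * f a = ∑ b, q b * (p a * f a) :=
        Finset.sum_congr rfl fun b _ => by ring
    _ = (∑ b, q b) * (p a * f a) := (Finset.sum_mul _ _ _).symm
    _ = p a * f a := by rw [hq, one_mul]

lemma expec_prod_snd (p : α → ℝ) (q : β → ℝ) (hp : ∑ a, p a = 1) (f : β → ℝ) :
    expec (fun z : α × β => p z.1 * q z.2) (fun z => f z.2) = expec q f := by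
  unfold expec
  simp only [Fintype.sum_prod_type_right]
  refine Finset.sum_congr rfl fun b _ => ?_
  calc ∑ a, p a * q b * f b = ∑ a, p a * (q b * f b) :=
        Finset.sum_congr rfl fun a _ => by ring
    _ = (∑ a, p a) * (q b * f b) := (Finset.sum_mul _ _ _).symm
    _ = q b * f b := by rw [hp, one_mul]

lemma pVar_prod_fst (p : α → ℝ) (q : β → ℝ) (hq : ∑ b, q b = 1) (f : α → ℝ) :
    pVar (fun z : α × β => p z.1 * q z.2) (fun z => f z.1) = pVar p f := by
  unfold pVar
  rw [expec_prod_fst p q hq (fun a => f a ^ 2), expec_prod_fst p q hq f]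

lemma pVar_prod_snd (p : α → ℝ) (q : β → ℝ) (hp : ∑ a, p a = 1) (f : β → ℝ) :
    pVar (fun z : α × β => p z.1 * q z.2) (fun z => f z.2) = pVar q f := by
  unfold pVar
  rw [expec_prod_snd p q hp (fun b => f b ^ 2), expec_prod_snd p q hp f]

end Fwd2

section Fwd
variable {α₁ β₁ α₂ β₂ : Type*} [Fintype α₁] [Fintype β₁] [Fintype α₂] [Fintype β₂]

def swapMid : (α₁ × β₁) × (α₂ × β₂) ≃ (α₁ × α₂) × (β₁ × β₂) where
  toFun z := ((z.1.1, z.2.1), (z.1.2, z.2.2))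
  invFun x := ((x.1.1, x.2.1), (x.1.2, x.2.2))
  left_inv z := rfl
  right_inv x := rfl

lemma sum_pair {p : α₁ → β₁ → ℝ} (h : IsDist p) : ∑ y : α₁ × β₁, p y.1 y.2 = 1 := by
  rw [Fintype.sum_prod_type]
  exact h.2

lemma jointVar_const {p : α₁ → β₁ → ℝ} (h : IsDist p) (c : ℝ) :
    jointVar p (fun _ _ => c) = 0 :=
  pVar_const _ (sum_pair h) c

lemma jointVar_prod (p1 : α₁ → β₁ → ℝ) (p2 : α₂ → β₂ → ℝ)
    (F : α₁ × α₂ → β₁ × β₂ → ℝ) :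
    jointVar (fun (a : α₁ × α₂) (b : β₁ × β₂) => p1 a.1 b.1 * p2 a.2 b.2) F
      = (∑ y : α₂ × β₂, p2 y.1 y.2 * jointVar p1 (fun a₁ b₁ => F (a₁, y.1) (b₁, y.2)))
        + jointVar p2 (fun a₂ b₂ =>
            expec (fun x : α₁ × β₁ => p1 x.1 x.2) (fun x => F (x.1, a₂) (x.2, b₂))) := by
  have hs : ∀ (G : (α₁ × α₂) → (β₁ × β₂) → ℝ),
      (∑ x : (α₁ × α₂) × (β₁ × β₂), (p1 x.1.1 x.2.1 * p2 x.1.2 x.2.2) * G x.1 x.2)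
      = ∑ z : (α₁ × β₁) × (α₂ × β₂),
          (p1 z.1.1 z.1.2 * p2 z.2.1 z.2.2) * G (z.1.1, z.2.1) (z.1.2, z.2.2) :=
    fun G => (Fintype.sum_equiv swapMid _ _ fun z => rfl).symm
  have e : jointVar (fun (a : α₁ × α₂) (b : β₁ × β₂) => p1 a.1 b.1 * p2 a.2 b.2) F
      = pVar (fun z : (α₁ × β₁) × (α₂ × β₂) => p1 z.1.1 z.1.2 * p2 z.2.1 z.2.2)
          (fun z => F (z.1.1, z.2.1) (z.1.2, z.2.2)) := by
    unfold jointVar pVar expec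
    congr 1
    · exact hs (fun a b => F a b ^ 2)
    · congr 1
      exact hs F
  rw [e]
  exact pVar_prod (fun x : α₁ × β₁ => p1 x.1 x.2) (fun y : α₂ × β₂ => p2 y.1 y.2)
    (fun x y => F (x.1, y.1) (x.2, y.2))

end Fwd

section Mem
variable {α₁ β₁ α₂ β₂ : Type*} [Fintype α₁] [Fintype β₁] [Fintype α₂] [Fintype β₂]

lemma memMC_fst {p1 : α₁ → β₁ → ℝ} {p2 : α₂ → β₂ → ℝ} (h1 : IsDist p1) (h2 : IsDist p2)
    {l1 l2 : ℝ}
    (h : memMC (fun (a : α₁ × α₂) (b : β₁ × β₂) => p1 a.1 b.1 * p2 a.2 b.2) l1 l2) :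
    memMC p1 l1 l2 := by
  obtain ⟨hl1, hl2, hP⟩ := h
  refine ⟨hl1, hl2, fun g => ?_⟩
  have key := hP (fun a b => g a.1 b.1)
  have E1 : jointVar (fun (a : α₁ × α₂) (b : β₁ × β₂) => p1 a.1 b.1 * p2 a.2 b.2)
      (fun a b => g a.1 b.1) = jointVar p1 g := by
    rw [jointVar_prod]
    show (∑ y : α₂ × β₂, p2 y.1 y.2 * jointVar p1 g)
        + jointVar p2 (fun _ _ =>
            expec (fun x : α₁ × β₁ => p1 x.1 x.2) (fun x => g x.1 x.2)) = jointVar p1 g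
    rw [← Finset.sum_mul, sum_pair h2, one_mul, jointVar_const h2, add_zero]
  have E2 : pVar (margA (fun (a : α₁ × α₂) (b : β₁ × β₂) => p1 a.1 b.1 * p2 a.2 b.2))
      (condExpB (fun (a : α₁ × α₂) (b : β₁ × β₂) => p1 a.1 b.1 * p2 a.2 b.2)
        (fun a b => g a.1 b.1))
      = pVar (margA p1) (condExpB p1 g) := by
    rw [margA_prod]
    refine (pVar_congr ?_).trans (pVar_prod_fst (margA p1) (margA p2) (sum_margA h2)
      (condExpB p1 g))
    intro a ha
    have h2z : margA p2 a.2 ≠ 0 := fun hz => ha (by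
      show margA p1 a.1 * margA p2 a.2 = 0
      rw [hz, mul_zero])
    simp only [condExpB, congrFun (margA_prod p1 p2)]
    have hnum : (∑ b : β₁ × β₂, p1 a.1 b.1 * p2 a.2 b.2 * g a.1 b.1)
        = (∑ b₁, p1 a.1 b₁ * g a.1 b₁) * margA p2 a.2 := by
      rw [Fintype.sum_prod_type, Finset.sum_mul]
      refine Finset.sum_congr rfl fun b₁ _ => ?_
      show ∑ b₂, p1 a.1 b₁ * p2 a.2 b₂ * g a.1 b₁ = p1 a.1 b₁ * g a.1 b₁ * ∑ b₂, p2 a.2 b₂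
      rw [Finset.mul_sum]
      exact Finset.sum_congr rfl fun b₂ _ => by ring
    rw [hnum, mul_div_mul_right _ _ h2z]
  have E3 : pVar (margB (fun (a : α₁ × α₂) (b : β₁ × β₂) => p1 a.1 b.1 * p2 a.2 b.2))
      (condExpA (fun (a : α₁ × α₂) (b : β₁ × β₂) => p1 a.1 b.1 * p2 a.2 b.2)
        (fun a b => g a.1 b.1))
      = pVar (margB p1) (condExpA p1 g) := by
    rw [margB_prod]
    refine (pVar_congr ?_).trans (pVar_prod_fst (margB p1) (margB p2) (sum_margB h2)
      (condExpA p1 g))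
    intro b hb
    have h2z : margB p2 b.2 ≠ 0 := fun hz => hb (by
      show margB p1 b.1 * margB p2 b.2 = 0
      rw [hz, mul_zero])
    simp only [condExpA, congrFun (margB_prod p1 p2)]
    have hnum : (∑ a : α₁ × α₂, p1 a.1 b.1 * p2 a.2 b.2 * g a.1 b.1)
        = (∑ a₁, p1 a₁ b.1 * g a₁ b.1) * margB p2 b.2 := by
      rw [Fintype.sum_prod_type, Finset.sum_mul]
      refine Finset.sum_congr rfl fun a₁ _ => ?_
      show ∑ a₂, p1 a₁ b.1 * p2 a₂ b.2 * g a₁ b.1 = p1 a₁ b.1 * g a₁ b.1 * ∑ a₂, p2 a₂ b.2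
      rw [Finset.mul_sum]
      exact Finset.sum_congr rfl fun a₂ _ => by ring
    rw [hnum, mul_div_mul_right _ _ h2z]
  rw [E1, E2, E3] at key
  exact key

lemma memMC_snd {p1 : α₁ → β₁ → ℝ} {p2 : α₂ → β₂ → ℝ} (h1 : IsDist p1) (h2 : IsDist p2)
    {l1 l2 : ℝ}
    (h : memMC (fun (a : α₁ × α₂) (b : β₁ × β₂) => p1 a.1 b.1 * p2 a.2 b.2) l1 l2) :
    memMC p2 l1 l2 := by
  obtain ⟨hl1, hl2, hP⟩ := h
  refine ⟨hl1, hl2, fun g => ?_⟩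
  have key := hP (fun a b => g a.2 b.2)
  have E1 : jointVar (fun (a : α₁ × α₂) (b : β₁ × β₂) => p1 a.1 b.1 * p2 a.2 b.2)
      (fun a b => g a.2 b.2) = jointVar p2 g := by
    rw [jointVar_prod]
    show (∑ y : α₂ × β₂, p2 y.1 y.2 * jointVar p1 (fun _ _ => g y.1 y.2))
        + jointVar p2 (fun a₂ b₂ =>
            expec (fun x : α₁ × β₁ => p1 x.1 x.2) (fun _ => g a₂ b₂)) = jointVar p2 g
    rw [Finset.sum_eq_zero fun y _ => by rw [jointVar_const h1, mul_zero], zero_add]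
    congr 1
    funext a₂ b₂
    exact expec_const _ (sum_pair h1) _
  have E2 : pVar (margA (fun (a : α₁ × α₂) (b : β₁ × β₂) => p1 a.1 b.1 * p2 a.2 b.2))
      (condExpB (fun (a : α₁ × α₂) (b : β₁ × β₂) => p1 a.1 b.1 * p2 a.2 b.2)
        (fun a b => g a.2 b.2))
      = pVar (margA p2) (condExpB p2 g) := by
    rw [margA_prod]
    refine (pVar_congr ?_).trans (pVar_prod_snd (margA p1) (margA p2) (sum_margA h1)
      (condExpB p2 g))
    intro a ha
    have h1z : margA p1 a.1 ≠ 0 := fun hz => ha (by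
      show margA p1 a.1 * margA p2 a.2 = 0
      rw [hz, zero_mul])
    simp only [condExpB, congrFun (margA_prod p1 p2)]
    have hnum : (∑ b : β₁ × β₂, p1 a.1 b.1 * p2 a.2 b.2 * g a.2 b.2)
        = margA p1 a.1 * ∑ b₂, p2 a.2 b₂ * g a.2 b₂ := by
      rw [Fintype.sum_prod_type_right, Finset.mul_sum]
      refine Finset.sum_congr rfl fun b₂ _ => ?_
      show ∑ b₁, p1 a.1 b₁ * p2 a.2 b₂ * g a.2 b₂ = (∑ b₁, p1 a.1 b₁) * (p2 a.2 b₂ * g a.2 b₂)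
      rw [Finset.sum_mul]
      exact Finset.sum_congr rfl fun b₁ _ => by ring
    rw [hnum, mul_div_mul_left _ _ h1z]
  have E3 : pVar (margB (fun (a : α₁ × α₂) (b : β₁ × β₂) => p1 a.1 b.1 * p2 a.2 b.2))
      (condExpA (fun (a : α₁ × α₂) (b : β₁ × β₂) => p1 a.1 b.1 * p2 a.2 b.2)
        (fun a b => g a.2 b.2))
      = pVar (margB p2) (condExpA p2 g) := by
    rw [margB_prod]
    refine (pVar_congr ?_).trans (pVar_prod_snd (margB p1) (margB p2) (sum_margB h1)
      (condExpA p2 g))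
    intro b hb
    have h1z : margB p1 b.1 ≠ 0 := fun hz => hb (by
      show margB p1 b.1 * margB p2 b.2 = 0
      rw [hz, zero_mul])
    simp only [condExpA, congrFun (margB_prod p1 p2)]
    have hnum : (∑ a : α₁ × α₂, p1 a.1 b.1 * p2 a.2 b.2 * g a.2 b.2)
        = margB p1 b.1 * ∑ a₂, p2 a₂ b.2 * g a₂ b.2 := by
      rw [Fintype.sum_prod_type_right, Finset.mul_sum]
      refine Finset.sum_congr rfl fun a₂ _ => ?_
      show ∑ a₁, p1 a₁ b.1 * p2 a₂ b.2 * g a₂ b.2 = (∑ a₁, p1 a₁ b.1) * (p2 a₂ b.2 * g a₂ b.2)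
      rw [Finset.sum_mul]
      exact Finset.sum_congr rfl fun a₁ _ => by ring
    rw [hnum, mul_div_mul_left _ _ h1z]
  rw [E1, E2, E3] at key
  exact key

end Mem

/-- tensorization of the maximal correlation ribbon: for independent pairs
`(A₁,B₁)` and `(A₂,B₂)`, `𝔖(A₁A₂, B₁B₂) = 𝔖(A₁,B₁) ∩ 𝔖(A₂,B₂)`. -/
theorem mc_ribbon_tensorization {α₁ β₁ α₂ β₂ : Type}
    [Fintype α₁] [Fintype β₁] [Fintype α₂] [Fintype β₂]
    (p1 : α₁ → β₁ → ℝ) (p2 : α₂ → β₂ → ℝ)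
    (h1 : IsDist p1) (h2 : IsDist p2) (l1 l2 : ℝ) :
    memMC (fun (a : α₁ × α₂) (b : β₁ × β₂) => p1 a.1 b.1 * p2 a.2 b.2) l1 l2
      ↔ memMC p1 l1 l2 ∧ memMC p2 l1 l2 := by
  constructor
  · intro h
    exact ⟨memMC_fst h1 h2 h, memMC_snd h1 h2 h⟩
  · rintro ⟨⟨hl1, hl2, hq1⟩, ⟨-, -, hq2⟩⟩
    refine ⟨hl1, hl2, fun F => ?_⟩
    have hGe : (fun a₂ b₂ => expec (fun x : α₁ × β₁ => p1 x.1 x.2)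
          (fun x => F (x.1, a₂) (x.2, b₂)))
        = fun a₂ b₂ => ∑ a₁, ∑ b₁, p1 a₁ b₁ * F (a₁, a₂) (b₁, b₂) := by
      funext a₂ b₂
      show ∑ x : α₁ × β₁, p1 x.1 x.2 * F (x.1, a₂) (x.2, b₂) = _
      rw [Fintype.sum_prod_type]
    have TV : jointVar (fun (a : α₁ × α₂) (b : β₁ × β₂) => p1 a.1 b.1 * p2 a.2 b.2) F
        = (∑ y : α₂ × β₂, p2 y.1 y.2 * jointVar p1 (fun a₁ b₁ => F (a₁, y.1) (b₁, y.2)))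
          + jointVar p2 (fun a₂ b₂ => ∑ a₁, ∑ b₁, p1 a₁ b₁ * F (a₁, a₂) (b₁, b₂)) :=
      (jointVar_prod p1 p2 F).trans (by rw [hGe])
    have S1 : ∑ y : α₂ × β₂, p2 y.1 y.2 *
          (l1 * pVar (margA p1) (condExpB p1 (fun a₁ b₁ => F (a₁, y.1) (b₁, y.2)))
           + l2 * pVar (margB p1) (condExpA p1 (fun a₁ b₁ => F (a₁, y.1) (b₁, y.2))))
        ≤ ∑ y : α₂ × β₂, p2 y.1 y.2 * jointVar p1 (fun a₁ b₁ => F (a₁, y.1) (b₁, y.2)) :=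
      Finset.sum_le_sum fun y _ => mul_le_mul_of_nonneg_left (hq1 _) (h2.1 y.1 y.2)
    have S2 := hq2 (fun a₂ b₂ => ∑ a₁, ∑ b₁, p1 a₁ b₁ * F (a₁, a₂) (b₁, b₂))
    have KA : pVar (margA (fun (a : α₁ × α₂) (b : β₁ × β₂) => p1 a.1 b.1 * p2 a.2 b.2))
          (condExpB (fun (a : α₁ × α₂) (b : β₁ × β₂) => p1 a.1 b.1 * p2 a.2 b.2) F)
        ≤ (∑ y : α₂ × β₂, p2 y.1 y.2 *
              pVar (margA p1) (condExpB p1 (fun a₁ b₁ => F (a₁, y.1) (b₁, y.2))))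
          + pVar (margA p2) (condExpB p2
              (fun a₂ b₂ => ∑ a₁, ∑ b₁, p1 a₁ b₁ * F (a₁, a₂) (b₁, b₂))) := by
      refine le_trans (key_ineq p1 p2 h1 h2 F) (le_of_eq ?_)
      congr 1
      rw [Fintype.sum_prod_type]
    have KB : pVar (margB (fun (a : α₁ × α₂) (b : β₁ × β₂) => p1 a.1 b.1 * p2 a.2 b.2))
          (condExpA (fun (a : α₁ × α₂) (b : β₁ × β₂) => p1 a.1 b.1 * p2 a.2 b.2) F)
        ≤ (∑ y : α₂ × β₂, p2 y.1 y.2 *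
              pVar (margB p1) (condExpA p1 (fun a₁ b₁ => F (a₁, y.1) (b₁, y.2))))
          + pVar (margB p2) (condExpA p2
              (fun a₂ b₂ => ∑ a₁, ∑ b₁, p1 a₁ b₁ * F (a₁, a₂) (b₁, b₂))) := by
      refine le_trans (key_ineq' p1 p2 h1 h2 F) (le_of_eq ?_)
      congr 1
      · rw [Fintype.sum_prod_type_right]
      · have hsw : (fun (a₂ : α₂) (b₂ : β₂) => ∑ b₁, ∑ a₁, p1 a₁ b₁ * F (a₁, a₂) (b₁, b₂))
            = fun a₂ b₂ => ∑ a₁, ∑ b₁, p1 a₁ b₁ * F (a₁, a₂) (b₁, b₂) :=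
          funext fun a₂ => funext fun b₂ => Finset.sum_comm
        rw [hsw]
    have expand : ∑ y : α₂ × β₂, p2 y.1 y.2 *
          (l1 * pVar (margA p1) (condExpB p1 (fun a₁ b₁ => F (a₁, y.1) (b₁, y.2)))
           + l2 * pVar (margB p1) (condExpA p1 (fun a₁ b₁ => F (a₁, y.1) (b₁, y.2))))
        = l1 * ∑ y : α₂ × β₂, p2 y.1 y.2 *
              pVar (margA p1) (condExpB p1 (fun a₁ b₁ => F (a₁, y.1) (b₁, y.2)))
          + l2 * ∑ y : α₂ × β₂, p2 y.1 y.2 *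
              pVar (margB p1) (condExpA p1 (fun a₁ b₁ => F (a₁, y.1) (b₁, y.2))) := by
      rw [Finset.mul_sum, Finset.mul_sum, ← Finset.sum_add_distrib]
      exact Finset.sum_congr rfl fun y _ => by ring
    calc l1 * pVar (margA (fun (a : α₁ × α₂) (b : β₁ × β₂) => p1 a.1 b.1 * p2 a.2 b.2))
            (condExpB (fun (a : α₁ × α₂) (b : β₁ × β₂) => p1 a.1 b.1 * p2 a.2 b.2) F)
          + l2 * pVar (margB (fun (a : α₁ × α₂) (b : β₁ × β₂) => p1 a.1 b.1 * p2 a.2 b.2))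
            (condExpA (fun (a : α₁ × α₂) (b : β₁ × β₂) => p1 a.1 b.1 * p2 a.2 b.2) F)
        ≤ l1 * ((∑ y : α₂ × β₂, p2 y.1 y.2 *
              pVar (margA p1) (condExpB p1 (fun a₁ b₁ => F (a₁, y.1) (b₁, y.2))))
            + pVar (margA p2) (condExpB p2
                (fun a₂ b₂ => ∑ a₁, ∑ b₁, p1 a₁ b₁ * F (a₁, a₂) (b₁, b₂))))
          + l2 * ((∑ y : α₂ × β₂, p2 y.1 y.2 *
              pVar (margB p1) (condExpA p1 (fun a₁ b₁ => F (a₁, y.1) (b₁, y.2))))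
            + pVar (margB p2) (condExpA p2
                (fun a₂ b₂ => ∑ a₁, ∑ b₁, p1 a₁ b₁ * F (a₁, a₂) (b₁, b₂)))) :=
          add_le_add (mul_le_mul_of_nonneg_left KA hl1) (mul_le_mul_of_nonneg_left KB hl2)
      _ = (∑ y : α₂ × β₂, p2 y.1 y.2 *
            (l1 * pVar (margA p1) (condExpB p1 (fun a₁ b₁ => F (a₁, y.1) (b₁, y.2)))
             + l2 * pVar (margB p1) (condExpA p1 (fun a₁ b₁ => F (a₁, y.1) (b₁, y.2)))))
          + (l1 * pVar (margA p2) (condExpB p2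
                (fun a₂ b₂ => ∑ a₁, ∑ b₁, p1 a₁ b₁ * F (a₁, a₂) (b₁, b₂)))
             + l2 * pVar (margB p2) (condExpA p2
                (fun a₂ b₂ => ∑ a₁, ∑ b₁, p1 a₁ b₁ * F (a₁, a₂) (b₁, b₂)))) := by
          rw [expand]; ring
      _ ≤ (∑ y : α₂ × β₂, p2 y.1 y.2 * jointVar p1 (fun a₁ b₁ => F (a₁, y.1) (b₁, y.2)))
          + jointVar p2 (fun a₂ b₂ => ∑ a₁, ∑ b₁, p1 a₁ b₁ * F (a₁, a₂) (b₁, b₂)) :=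
          add_le_add S1 S2
      _ = jointVar (fun (a : α₁ × α₂) (b : β₁ × β₂) => p1 a.1 b.1 * p2 a.2 b.2) F := TV.symm
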